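/- arXiv:2412.21134 — 3 statements merged into one kernel-verified Lean document; each statement's English description precedes it below -/
import Mathlib

section
/- In the weak path completion variant of the bilevel shortest path problem (with nonnegative leader costs c and follower costs d, and assuming at least one s-t-path exists), there exists a pair (X, Y) with X ⊆ E^ℓ and Y ⊆ E^f such that X is an optimal leader's solution, Y is an optimal follower's response to X (under the optimistic tie-breaking minimizing c second), and X ∪ Y is itself exactly an s-t-path. -/
/-!
Among all leader choices `X ⊆ E^ℓ` paired with an optimal follower response `Y`, take one
minimizing first the leader's cost `c(X ∪ Y)` and then the size `|X ∪ Y|`. If `P ⊆ X ∪ Y` is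
a path, then `Y ∩ P` is still an optimal response to `X ∩ P`: since `c, d ≥ 0`, cutting the
response down to `P` cannot increase `d` or `c`, and shrinking `X` only removes feasible
responses. The pair `(X ∩ P, Y ∩ P)` has union `P`, so by minimality `X ∪ Y = P`.
-/

theorem Finset.inter_union_inter_eq_of_subset_union {α : Type*} [DecidableEq α]
    {s t u : Finset α} (h : u ⊆ s ∪ t) : s ∩ u ∪ t ∩ u = u := by
  rw [← Finset.union_inter_distrib_right, Finset.inter_eq_right.2 h]

theorem Finset.exists_lex_min_image {α β γ : Type*} [LinearOrder β] [LinearOrder γ]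
    (s : Finset α) (hs : s.Nonempty) (f : α → β) (g : α → γ) :
    ∃ x ∈ s, ∀ y ∈ s, f x ≤ f y ∧ (f y = f x → g x ≤ g y) := by
  obtain ⟨x, hx, hmin⟩ := s.exists_min_image (fun a => toLex (f a, g a)) hs
  refine ⟨x, hx, fun y hy => ?_⟩
  rcases Prod.Lex.toLex_le_toLex.1 (hmin y hy) with hlt | ⟨heq, hle⟩
  · exact ⟨hlt.le, fun h => absurd h hlt.ne'⟩
  · exact ⟨heq.le, fun _ => hle⟩

namespace BilevelShortestPath

variable {E : Type*} [DecidableEq E] (Ef : Finset E) (Paths : Set (Finset E)) (c d : E → ℝ)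

def IsFeasibleResponse (X Y : Finset E) : Prop :=
  Y ⊆ Ef ∧ ∃ P ∈ Paths, P ⊆ X ∪ Y

def IsOptimalResponse (X Y : Finset E) : Prop :=
  IsFeasibleResponse Ef Paths X Y ∧
  ∀ Y', IsFeasibleResponse Ef Paths X Y' →
    ∑ e ∈ Y, d e ≤ ∑ e ∈ Y', d e ∧
    (∑ e ∈ Y', d e = ∑ e ∈ Y, d e → ∑ e ∈ Y, c e ≤ ∑ e ∈ Y', c e)

variable {Ef Paths c d}

theorem IsFeasibleResponse.mono_left {X X' Y : Finset E} (h : IsFeasibleResponse Ef Paths X Y)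
    (hX : X ⊆ X') : IsFeasibleResponse Ef Paths X' Y :=
  let ⟨hY, P, hP, hPXY⟩ := h
  ⟨hY, P, hP, hPXY.trans (Finset.union_subset_union hX le_rfl)⟩

theorem exists_isOptimalResponse {X : Finset E} (hX : ∃ Y, IsFeasibleResponse Ef Paths X Y) :
    ∃ Y, IsOptimalResponse Ef Paths c d X Y := by
  classical
  obtain ⟨Y₀, hY₀⟩ := hX
  obtain ⟨Y, hY, hmin⟩ := (Ef.powerset.filter (IsFeasibleResponse Ef Paths X))
    |>.exists_lex_min_image ⟨Y₀, by simpa using ⟨hY₀.1, hY₀⟩⟩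
      (fun Y => ∑ e ∈ Y, d e) (fun Y => ∑ e ∈ Y, c e)
  simp only [Finset.mem_filter, Finset.mem_powerset] at hY hmin
  exact ⟨Y, hY.2, fun Y' hY' => hmin Y' ⟨hY'.1, hY'⟩⟩

theorem IsOptimalResponse.inter_path (hc : ∀ e, 0 ≤ c e) (hd : ∀ e, 0 ≤ d e)
    {X Y P : Finset E} (hXY : IsOptimalResponse Ef Paths c d X Y) (hP : P ∈ Paths)
    (hPXY : P ⊆ X ∪ Y) : IsOptimalResponse Ef Paths c d (X ∩ P) (Y ∩ P) := by
  obtain ⟨⟨hYEf, -⟩, hopt⟩ := hXY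
  have hdP : ∑ e ∈ Y ∩ P, d e ≤ ∑ e ∈ Y, d e :=
    Finset.sum_le_sum_of_subset_of_nonneg Finset.inter_subset_left fun e _ _ => hd e
  have hcP : ∑ e ∈ Y ∩ P, c e ≤ ∑ e ∈ Y, c e :=
    Finset.sum_le_sum_of_subset_of_nonneg Finset.inter_subset_left fun e _ _ => hc e
  refine ⟨⟨Finset.inter_subset_left.trans hYEf, P, hP,
    (Finset.inter_union_inter_eq_of_subset_union hPXY).ge⟩, fun Y' hY' => ?_⟩
  obtain ⟨hdY', hcY'⟩ := hopt Y' (hY'.mono_left Finset.inter_subset_left)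
  refine ⟨hdP.trans hdY', fun hdeq => hcP.trans (hcY' ?_)⟩
  linarith

theorem exists_optimal_union_mem (El : Finset E) (hPaths : Paths.Nonempty)
    (hedges : ∀ P ∈ Paths, P ⊆ El ∪ Ef) (hc : ∀ e, 0 ≤ c e) (hd : ∀ e, 0 ≤ d e) :
    ∃ X Y, X ⊆ El ∧ IsOptimalResponse Ef Paths c d X Y ∧
      (∀ X' Y', X' ⊆ El → IsOptimalResponse Ef Paths c d X' Y' →
        ∑ e ∈ X ∪ Y, c e ≤ ∑ e ∈ X' ∪ Y', c e) ∧
      X ∪ Y ∈ Paths := by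
  classical
  obtain ⟨P₀, hP₀⟩ := hPaths
  obtain ⟨Y₀, hY₀⟩ := exists_isOptimalResponse (c := c) (d := d)
    ⟨Ef, le_rfl, P₀, hP₀, hedges P₀ hP₀⟩
  obtain ⟨⟨X, Y⟩, hXY, hmin⟩ :=
    ((El.powerset ×ˢ Ef.powerset).filter fun q => IsOptimalResponse Ef Paths c d q.1 q.2)
      |>.exists_lex_min_image ⟨(El, Y₀), by simpa using ⟨hY₀.1.1, hY₀⟩⟩
        (fun q => ∑ e ∈ q.1 ∪ q.2, c e) (fun q => (q.1 ∪ q.2).card)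
  simp only [Finset.mem_filter, Finset.mem_product, Finset.mem_powerset, and_imp,
    Prod.forall] at hXY hmin
  obtain ⟨⟨hXEl, -⟩, hopt⟩ := hXY
  have hmin' X' Y' (hX' : X' ⊆ El) (hopt' : IsOptimalResponse Ef Paths c d X' Y') :=
    hmin X' Y' hX' hopt'.1.1 hopt'
  refine ⟨X, Y, hXEl, hopt, fun X' Y' hX' hopt' => (hmin' X' Y' hX' hopt').1, ?_⟩
  obtain ⟨P, hP, hPXY⟩ := hopt.1.2
  obtain ⟨hcle, hcard⟩ := hmin' (X ∩ P) (Y ∩ P) (Finset.inter_subset_left.trans hXEl)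
    (hopt.inter_path hc hd hP hPXY)
  rw [Finset.inter_union_inter_eq_of_subset_union hPXY] at hcle hcard
  have hcP : ∑ e ∈ P, c e ≤ ∑ e ∈ X ∪ Y, c e :=
    Finset.sum_le_sum_of_subset_of_nonneg hPXY fun e _ _ => hc e
  rwa [← Finset.eq_of_subset_of_card_le hPXY (hcard (le_antisymm hcP hcle))]

end BilevelShortestPath

theorem stmt_1_general {E : Type*} [DecidableEq E]
    (El Ef : Finset E)
    (Paths : Set (Finset E)) (hPaths : Paths.Nonempty)
    (hedges : ∀ P ∈ Paths, P ⊆ El ∪ Ef)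
    (c : E → ℝ) (hc : ∀ e, 0 ≤ c e)
    (d : E → ℝ) (hd : ∀ e, 0 ≤ d e) :
    ∃ X Y : Finset E, X ⊆ El ∧ Y ⊆ Ef ∧
      -- Y is weak-feasible for X
      (∃ P ∈ Paths, P ⊆ X ∪ Y) ∧
      -- Y is an optimal follower's response to X (minimizing d, then c)
      (∀ Y' : Finset E, Y' ⊆ Ef → (∃ P ∈ Paths, P ⊆ X ∪ Y') →
        (∑ e ∈ Y, d e) ≤ ∑ e ∈ Y', d e) ∧
      (∀ Y' : Finset E, Y' ⊆ Ef → (∃ P ∈ Paths, P ⊆ X ∪ Y') →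
        (∑ e ∈ Y', d e) = (∑ e ∈ Y, d e) → (∑ e ∈ Y, c e) ≤ ∑ e ∈ Y', c e) ∧
      -- X is an optimal leader's solution: any leader's choice X' together with
      -- any optimal follower's response Y' to it costs the leader at least c(X ∪ Y)
      (∀ X' Y' : Finset E, X' ⊆ El → Y' ⊆ Ef →
        (∃ P ∈ Paths, P ⊆ X' ∪ Y') →
        (∀ Y'' : Finset E, Y'' ⊆ Ef → (∃ P ∈ Paths, P ⊆ X' ∪ Y'') →
          (∑ e ∈ Y', d e) ≤ ∑ e ∈ Y'', d e) →
        (∀ Y'' : Finset E, Y'' ⊆ Ef → (∃ P ∈ Paths, P ⊆ X' ∪ Y'') →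
          (∑ e ∈ Y'', d e) = (∑ e ∈ Y', d e) → (∑ e ∈ Y', c e) ≤ ∑ e ∈ Y'', c e) →
        (∑ e ∈ X ∪ Y, c e) ≤ ∑ e ∈ X' ∪ Y', c e) ∧
      -- X ∪ Y is exactly an s-t-path
      X ∪ Y ∈ Paths := by
  obtain ⟨X, Y, hXEl, ⟨⟨hYEf, hfeas⟩, hopt⟩, hleader, hpath⟩ :=
    BilevelShortestPath.exists_optimal_union_mem El hPaths hedges hc hd
  refine ⟨X, Y, hXEl, hYEf, hfeas, fun Y' h₁ h₂ => (hopt Y' ⟨h₁, h₂⟩).1,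
    fun Y' h₁ h₂ => (hopt Y' ⟨h₁, h₂⟩).2, ?_, hpath⟩
  intro X' Y' hX' hY' hfeas' hd' hc'
  exact hleader X' Y' hX' ⟨⟨hY', hfeas'⟩, fun Y'' ⟨h₁, h₂⟩ => ⟨hd' Y'' h₁ h₂, hc' Y'' h₁ h₂⟩⟩

/-- In the weak path completion variant there exists an optimal leader's solution `X`
together with an optimal (optimistic) follower's response `Y` such that `X ∪ Y` is
exactly an s-t-path. -/
theorem stmt_1 {E : Type*} [DecidableEq E] [Fintype E]
    (El Ef : Finset E) (hdisj : Disjoint El Ef)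
    (Paths : Set (Finset E)) (hPaths : Paths.Nonempty)
    (hedges : ∀ P ∈ Paths, P ⊆ El ∪ Ef)
    (c : E → ℝ) (hc : ∀ e, 0 ≤ c e)
    (d : E → ℝ) (hd : ∀ e, 0 ≤ d e) :
    ∃ X Y : Finset E, X ⊆ El ∧ Y ⊆ Ef ∧
      -- Y is weak-feasible for X
      (∃ P ∈ Paths, P ⊆ X ∪ Y) ∧
      -- Y is an optimal follower's response to X (minimizing d, then c)
      (∀ Y' : Finset E, Y' ⊆ Ef → (∃ P ∈ Paths, P ⊆ X ∪ Y') →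
        (∑ e ∈ Y, d e) ≤ ∑ e ∈ Y', d e) ∧
      (∀ Y' : Finset E, Y' ⊆ Ef → (∃ P ∈ Paths, P ⊆ X ∪ Y') →
        (∑ e ∈ Y', d e) = (∑ e ∈ Y, d e) → (∑ e ∈ Y, c e) ≤ ∑ e ∈ Y', c e) ∧
      -- X is an optimal leader's solution: any leader's choice X' together with
      -- any optimal follower's response Y' to it costs the leader at least c(X ∪ Y)
      (∀ X' Y' : Finset E, X' ⊆ El → Y' ⊆ Ef →
        (∃ P ∈ Paths, P ⊆ X' ∪ Y') →
        (∀ Y'' : Finset E, Y'' ⊆ Ef → (∃ P ∈ Paths, P ⊆ X' ∪ Y'') →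
          (∑ e ∈ Y', d e) ≤ ∑ e ∈ Y'', d e) →
        (∀ Y'' : Finset E, Y'' ⊆ Ef → (∃ P ∈ Paths, P ⊆ X' ∪ Y'') →
          (∑ e ∈ Y'', d e) = (∑ e ∈ Y', d e) → (∑ e ∈ Y', c e) ≤ ∑ e ∈ Y'', c e) →
        (∑ e ∈ X ∪ Y, c e) ≤ ∑ e ∈ X' ∪ Y', c e) ∧
      -- X ∪ Y is exactly an s-t-path
      X ∪ Y ∈ Paths :=
  stmt_1_general El Ef Paths hPaths hedges c hc d hd
end

section
/- For every instance I of the bilevel shortest path problem (directed or undirected, with a feasible s-t-path), the leader's optimal value in the strong path completion variant is at most the leader's optimal value in the weak path completion variant: OPT_strong(I) ≤ OPT_weak(I). -/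
open scoped ENNReal

/-!
Given a weak solution `(X, Y)` whose union contains the path `P`, restrict both players to `P`:
the leader plays `P ∩ Eˡ` and the follower `P ∩ Eᶠ`. Their union is exactly `P`, and the follower's
answer is optimal, since every completion of `P ∩ Eˡ` to a path also completes `X` to a superset of a
path, so it costs the follower at least `d(Y) ≥ d(P ∩ Eᶠ)`. As `P ⊆ X ∪ Y`, the leader pays no more.
-/

namespace BilevelShortestPath

variable {E : Type*} [DecidableEq E]

def IsStrongSolution (El Ef : Finset E) (Paths : Set (Finset E)) (d : E → ℝ≥0∞)
    (X Y : Finset E) : Prop :=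
  X ⊆ El ∧ Y ⊆ Ef ∧ X ∪ Y ∈ Paths ∧
    ∀ Y' : Finset E, Y' ⊆ Ef → X ∪ Y' ∈ Paths → (∑ e ∈ Y, d e) ≤ ∑ e ∈ Y', d e

def IsWeakSolution (El Ef : Finset E) (Paths : Set (Finset E)) (d : E → ℝ≥0∞)
    (X Y : Finset E) : Prop :=
  X ⊆ El ∧ Y ⊆ Ef ∧ (∃ P ∈ Paths, P ⊆ X ∪ Y) ∧
    ∀ Y' : Finset E, Y' ⊆ Ef → (∃ P ∈ Paths, P ⊆ X ∪ Y') →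
      (∑ e ∈ Y, d e) ≤ ∑ e ∈ Y', d e

theorem inter_subset_of_subset_union {P X Y A : Finset E} (hP : P ⊆ X ∪ Y) (hA : Disjoint A Y) :
    P ∩ A ⊆ X :=
  (hA.mono_left Finset.inter_subset_right).left_le_of_le_sup_right
    (Finset.inter_subset_left.trans hP)

theorem inter_union_inter_of_subset_union {P A B : Finset E} (h : P ⊆ A ∪ B) :
    P ∩ A ∪ P ∩ B = P := by
  rw [← Finset.inter_union_distrib_left, Finset.inter_eq_left.mpr h]

theorem isStrongSolution_inter_of_isWeakSolution {El Ef : Finset E} (hdisj : Disjoint El Ef)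
    {Paths : Set (Finset E)} {d : E → ℝ≥0∞} {X Y P : Finset E}
    (hXY : IsWeakSolution El Ef Paths d X Y) (hP : P ∈ Paths) (hPE : P ⊆ El ∪ Ef)
    (hPXY : P ⊆ X ∪ Y) :
    IsStrongSolution El Ef Paths d (P ∩ El) (P ∩ Ef) := by
  obtain ⟨hX, hY, -, hopt⟩ := hXY
  have hleader : P ∩ El ⊆ X :=
    inter_subset_of_subset_union hPXY (hdisj.mono_right hY)
  have hfollower : P ∩ Ef ⊆ Y :=
    inter_subset_of_subset_union (Finset.union_comm X Y ▸ hPXY) (hdisj.symm.mono_right hX)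
  refine ⟨Finset.inter_subset_right, Finset.inter_subset_right, ?_, fun Y' hY' hpath => ?_⟩
  · rwa [inter_union_inter_of_subset_union hPE]
  · calc (∑ e ∈ P ∩ Ef, d e) ≤ ∑ e ∈ Y, d e := Finset.sum_le_sum_of_subset hfollower
      _ ≤ ∑ e ∈ Y', d e :=
        hopt Y' hY' ⟨P ∩ El ∪ Y', hpath, Finset.union_subset_union_left hleader⟩

end BilevelShortestPath

open BilevelShortestPath in
theorem stmt_2_general {E : Type*} [DecidableEq E]
    (El Ef : Finset E) (hdisj : Disjoint El Ef)
    (Paths : Set (Finset E))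
    (hedges : ∀ P ∈ Paths, P ⊆ El ∪ Ef)
    (c d : E → ℝ≥0∞) :
    -- OPT_strong: infimum of c(X ∪ Y) over leader's choices X and follower-optimal
    -- responses Y with X ∪ Y exactly a path
    (⨅ (X : Finset E) (Y : Finset E)
        (_ : X ⊆ El ∧ Y ⊆ Ef ∧ X ∪ Y ∈ Paths ∧
          ∀ Y' : Finset E, Y' ⊆ Ef → X ∪ Y' ∈ Paths → (∑ e ∈ Y, d e) ≤ ∑ e ∈ Y', d e),
        ∑ e ∈ X ∪ Y, c e) ≤
    -- OPT_weak: same but with X ∪ Y merely containing a path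
    (⨅ (X : Finset E) (Y : Finset E)
        (_ : X ⊆ El ∧ Y ⊆ Ef ∧ (∃ P ∈ Paths, P ⊆ X ∪ Y) ∧
          ∀ Y' : Finset E, Y' ⊆ Ef → (∃ P ∈ Paths, P ⊆ X ∪ Y') →
            (∑ e ∈ Y, d e) ≤ ∑ e ∈ Y', d e),
        ∑ e ∈ X ∪ Y, c e) := by
  refine le_iInf₂ fun X Y => le_iInf fun hXY => ?_
  obtain ⟨P, hP, hPXY⟩ := hXY.2.2.1
  have hstrong : IsStrongSolution El Ef Paths d (P ∩ El) (P ∩ Ef) :=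
    isStrongSolution_inter_of_isWeakSolution hdisj hXY hP (hedges P hP) hPXY
  calc _ ≤ ∑ e ∈ P ∩ El ∪ P ∩ Ef, c e := iInf₂_le_of_le (P ∩ El) (P ∩ Ef) (iInf_le _ hstrong)
    _ ≤ ∑ e ∈ X ∪ Y, c e := by
      rw [inter_union_inter_of_subset_union (hedges P hP)]
      exact Finset.sum_le_sum_of_subset hPXY

/-- The leader's optimal value in the strong path completion variant is at most the
leader's optimal value in the weak path completion variant: `OPT_strong ≤ OPT_weak`. -/
theorem stmt_2 {E : Type*} [DecidableEq E] [Fintype E]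
    (El Ef : Finset E) (hdisj : Disjoint El Ef)
    (Paths : Set (Finset E)) (hPaths : Paths.Nonempty)
    (hedges : ∀ P ∈ Paths, P ⊆ El ∪ Ef)
    (c d : E → ℝ≥0∞) :
    -- OPT_strong: infimum of c(X ∪ Y) over leader's choices X and follower-optimal
    -- responses Y with X ∪ Y exactly a path
    (⨅ (X : Finset E) (Y : Finset E)
        (_ : X ⊆ El ∧ Y ⊆ Ef ∧ X ∪ Y ∈ Paths ∧
          ∀ Y' : Finset E, Y' ⊆ Ef → X ∪ Y' ∈ Paths → (∑ e ∈ Y, d e) ≤ ∑ e ∈ Y', d e),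
        ∑ e ∈ X ∪ Y, c e) ≤
    -- OPT_weak: same but with X ∪ Y merely containing a path
    (⨅ (X : Finset E) (Y : Finset E)
        (_ : X ⊆ El ∧ Y ⊆ Ef ∧ (∃ P ∈ Paths, P ⊆ X ∪ Y) ∧
          ∀ Y' : Finset E, Y' ⊆ Ef → (∃ P ∈ Paths, P ⊆ X ∪ Y') →
            (∑ e ∈ Y, d e) ≤ ∑ e ∈ Y', d e),
        ∑ e ∈ X ∪ Y, c e) :=
  stmt_2_general El Ef hdisj Paths hedges c d
end

section
/- In the reduction graph for the independent-set hardness proof of the weak variant, suppose X ⊆ E^ℓ and Y ⊆ E^f are such that X ∪ Y is a simple s-t-path containing no shortcut edge. If for some vertex v of the original graph, X contains exactly one of the two leader's edges {v₁,v₂} and {v₂,v₃}, then X ∪ Y must contain a shortcut edge — a contradiction. Hence for every v, X contains either both or neither of {v₁,v₂}, {v₂,v₃}. -/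
namespace Stmt17

/-- Relation generating the reduction graph on `Fin n × Fin 3`: for each `i` the
leader's edges `{(i,0),(i,1)}`, `{(i,1),(i,2)}` and the follower's direct edge
`{(i,0),(i,2)}`; connector edges `{(i,2),(i+1,0)}`; and shortcut edges
`{(i,1),(j,1)}` for every edge `{i,j}` of `G`. -/
def rel (n : ℕ) (G : SimpleGraph (Fin n)) :
    Fin n × Fin 3 → Fin n × Fin 3 → Prop := fun x y =>
  (x.1 = y.1 ∧ ((x.2 = 0 ∧ y.2 = 1) ∨ (x.2 = 1 ∧ y.2 = 2) ∨ (x.2 = 0 ∧ y.2 = 2))) ∨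
  ((y.1 : ℕ) = (x.1 : ℕ) + 1 ∧ x.2 = 2 ∧ y.2 = 0) ∨
  (x.2 = 1 ∧ y.2 = 1 ∧ G.Adj x.1 y.1)

/-- The reduction graph. -/
def redGraph (n : ℕ) (G : SimpleGraph (Fin n)) : SimpleGraph (Fin n × Fin 3) :=
  SimpleGraph.fromRel (rel n G)

/-- The leader's edges. -/
def leaderEdges (n : ℕ) : Set (Sym2 (Fin n × Fin 3)) :=
  {e | ∃ i : Fin n, e = s((i, (0 : Fin 3)), (i, 1)) ∨ e = s((i, (1 : Fin 3)), (i, 2))}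

/-- The shortcut edges. -/
def shortcuts (n : ℕ) : Set (Sym2 (Fin n × Fin 3)) :=
  {e | ∃ i j : Fin n, e = s((i, (1 : Fin 3)), (j, 1))}

end Stmt17

/-!
The middle vertex `(i,1)` of the `i`-th triple is neither endpoint of the path, so if the path
visits it, it uses two distinct edges at `(i,1)`. Apart from shortcuts, the only edges at `(i,1)`
are the two leader's edges, so a shortcut-free path uses both of them or neither; and a leader's
edge on the path lies in `X`, because `Y` contains none.
-/

namespace SimpleGraph.Walk

variable {V : Type*} {G : SimpleGraph V} {u v w : V}

theorem IsTrail.exists_ne_mem_edges_of_mem_support [DecidableEq V] {p : G.Walk u w}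
    (hp : p.IsTrail) (hv : v ∈ p.support) (hu : v ≠ u) (hw : v ≠ w) :
    ∃ e₁ ∈ p.edges, ∃ e₂ ∈ p.edges, e₁ ≠ e₂ ∧ v ∈ e₁ ∧ v ∈ e₂ := by
  have hin : s((p.takeUntil v hv).penultimate, v) ∈ (p.takeUntil v hv).edges :=
    mk_penultimate_end_mem_edges (not_nil_of_ne hu.symm)
  have hout : s(v, (p.dropUntil v hv).snd) ∈ (p.dropUntil v hv).edges :=
    mk_start_snd_mem_edges (not_nil_of_ne hw)
  exact ⟨_, p.edges_takeUntil_subset_edges hv hin, _, p.edges_dropUntil_subset_edges hv hout,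
    fun h => hp.disjoint_edges_takeUntil_dropUntil hv hin (h ▸ hout), by simp, by simp⟩

end SimpleGraph.Walk

namespace Stmt17

theorem eq_or_eq_of_mem_edgeSet_of_notMem_shortcuts {n : ℕ} {G : SimpleGraph (Fin n)}
    {e : Sym2 (Fin n × Fin 3)} (he : e ∈ (redGraph n G).edgeSet) {i : Fin n}
    (hi : (i, 1) ∈ e) (hns : e ∉ shortcuts n) :
    e = s((i, 0), (i, 1)) ∨ e = s((i, 1), (i, 2)) := by
  obtain ⟨⟨j, c⟩, rfl⟩ := Sym2.mem_iff_exists.mp hi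
  have hc : c ≠ 1 := by rintro rfl; exact hns ⟨i, j, rfl⟩
  fin_cases c <;> simp_all [redGraph, rel, Sym2.eq_swap]

/-- If `X ∪ Y` is the edge set of a simple `s`-`t`-path containing no shortcut edge,
then for every vertex `i` of the original graph, `X` contains either both or neither of
the two leader's edges `{(i,0),(i,1)}` and `{(i,1),(i,2)}`. -/
theorem stmt_17 (n : ℕ) (hn : 0 < n) (G : SimpleGraph (Fin n))
    (X Y : Set (Sym2 (Fin n × Fin 3)))
    (hY : Y ⊆ (redGraph n G).edgeSet \ leaderEdges n)
    (p : (redGraph n G).Walk (⟨0, hn⟩, 0) (⟨n - 1, by omega⟩, 2))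
    (hp : p.IsPath)
    (hedges : ∀ e, e ∈ p.edges ↔ e ∈ X ∪ Y)
    (hnoshort : ∀ e ∈ X ∪ Y, e ∉ shortcuts n) :
    ∀ i : Fin n,
      (s((i, (0 : Fin 3)), (i, 1)) ∈ X ↔ s((i, (1 : Fin 3)), (i, 2)) ∈ X) := by
  intro i
  have hmid : ∀ e ∈ p.edges, (i, 1) ∈ e → e = s((i, 0), (i, 1)) ∨ e = s((i, 1), (i, 2)) :=
    fun e he hi => eq_or_eq_of_mem_edgeSet_of_notMem_shortcuts (p.edges_subset_edgeSet he) hi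
      (hnoshort e ((hedges e).mp he))
  have hleader : ∀ e, e = s((i, 0), (i, 1)) ∨ e = s((i, 1), (i, 2)) →
      (e ∈ X ↔ (i, 1) ∈ p.support) := by
    intro e he
    refine ⟨fun hX => p.mem_support_of_mem_edges ((hedges e).mpr (.inl hX)) ?_, fun hi => ?_⟩
    · rcases he with rfl | rfl <;> simp
    obtain ⟨e₁, he₁, e₂, he₂, hne, hi₁, hi₂⟩ :=
      hp.isTrail.exists_ne_mem_edges_of_mem_support hi (by simp) (by simp)
    have hep : e ∈ p.edges := by
      rcases hmid e₁ he₁ hi₁ with rfl | rfl <;> rcases hmid e₂ he₂ hi₂ with rfl | rfl <;>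
        rcases he with rfl | rfl <;> trivial
    have heY : e ∉ Y := fun heY => (hY heY).2 (he.elim (⟨i, .inl ·⟩) (⟨i, .inr ·⟩))
    exact ((hedges e).mp hep).resolve_right heY
  exact (hleader _ (.inl rfl)).trans (hleader _ (.inr rfl)).symm

end Stmt17
end
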